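/- arXiv:2505.06366 — 7 statements merged into one kernel-verified Lean document; each statement's English description precedes it below -/
import Mathlib

section
/- (Cocycle identity for the Koszul sign.) For every n : ℕ, every multiweight α : Fin n → Bool and all permutations σ, τ of Fin n, one has sgn(α, σ ∘ τ) = sgn(α ∘ τ⁻¹, σ) · sgn(α, τ), where σ ∘ τ denotes the composite permutation i ↦ σ(τ(i)) and α ∘ τ⁻¹ is the multiweight i ↦ α(τ⁻¹(i)). -/
/-- The Koszul sign of a multiweight `α : Fin n → Bool` and a permutation `σ`:
the product of `(-1)^(ε_α i * ε_α j)` over all inversions `i < j`, `σ j < σ i`. -/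
def koszulSign {n : ℕ} (α : Fin n → Bool) (σ : Equiv.Perm (Fin n)) : ℤ :=
  ∏ p ∈ Finset.univ.filter
      (fun p : Fin n × Fin n => p.1 < p.2 ∧ σ p.2 < σ p.1),
    (-1 : ℤ) ^ ((if α p.1 then 1 else 0) * (if α p.2 then 1 else 0))

theorem Equiv.Perm.apply_inv_self {β : Type*} (f : Equiv.Perm β) (x : β) : f (f⁻¹ x) = x :=
  f.apply_symm_apply x

theorem Equiv.Perm.inv_apply_self {β : Type*} (f : Equiv.Perm β) (x : β) : f⁻¹ (f x) = x :=
  f.symm_apply_apply x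

lemma koszulSign_eq_prod_ite {n : ℕ} (α : Fin n → Bool) (σ : Equiv.Perm (Fin n)) :
    koszulSign α σ = ∏ p ∈ Finset.univ.filter (fun p : Fin n × Fin n => p.1 < p.2),
      (if σ p.2 < σ p.1 then
        (-1 : ℤ) ^ ((if α p.1 then 1 else 0) * (if α p.2 then 1 else 0)) else 1) := by
  rw [Finset.prod_filter]
  unfold koszulSign
  rw [Finset.prod_filter]
  apply Finset.prod_congr rfl
  intro p _
  by_cases h1 : p.1 < p.2 <;> by_cases h2 : σ p.2 < σ p.1 <;> simp [h1, h2]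

/-- Cocycle identity for the Koszul sign:
`sgn(α, σ ∘ τ) = sgn(α ∘ τ⁻¹, σ) * sgn(α, τ)`. -/
theorem koszulSign_mul {n : ℕ} (α : Fin n → Bool) (σ τ : Equiv.Perm (Fin n)) :
    koszulSign α (σ * τ) = koszulSign (α ∘ ⇑τ⁻¹) σ * koszulSign α τ := by
  classical
  rw [koszulSign_eq_prod_ite, koszulSign_eq_prod_ite, koszulSign_eq_prod_ite]
  set P : Finset (Fin n × Fin n) :=
    Finset.univ.filter (fun p : Fin n × Fin n => p.1 < p.2) with hP
  set e : Fin n × Fin n → ℤ :=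
    fun p => (-1 : ℤ) ^ ((if α p.1 then 1 else 0) * (if α p.2 then 1 else 0)) with he
  -- reindex the σ-product
  have hσ : (∏ p ∈ P, (if σ p.2 < σ p.1 then
        (-1 : ℤ) ^ ((if (α ∘ ⇑τ⁻¹) p.1 then 1 else 0) * (if (α ∘ ⇑τ⁻¹) p.2 then 1 else 0)) else 1))
      = ∏ p ∈ P, (if (if τ p.1 < τ p.2 then σ (τ p.2) < σ (τ p.1) else σ (τ p.1) < σ (τ p.2))
          then e p else 1) := by
    apply Finset.prod_nbij'
      (i := fun p => if τ⁻¹ p.1 < τ⁻¹ p.2 then (τ⁻¹ p.1, τ⁻¹ p.2) else (τ⁻¹ p.2, τ⁻¹ p.1))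
      (j := fun p => if τ p.1 < τ p.2 then (τ p.1, τ p.2) else (τ p.2, τ p.1))
    · intro p hp
      simp only [hP, Finset.mem_filter, Finset.mem_univ, true_and] at hp ⊢
      rcases lt_or_ge (τ⁻¹ p.1) (τ⁻¹ p.2) with h | h
      · simp [-Equiv.Perm.coe_inv, h]
      · have hne : τ⁻¹ p.1 ≠ τ⁻¹ p.2 := fun hc => absurd (τ⁻¹.injective hc) hp.ne
        simp [-Equiv.Perm.coe_inv, not_lt_of_ge h, lt_of_le_of_ne h (Ne.symm hne)]
    · intro p hp
      simp only [hP, Finset.mem_filter, Finset.mem_univ, true_and] at hp ⊢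
      rcases lt_or_ge (τ p.1) (τ p.2) with h | h
      · simp [h]
      · have hne : τ p.1 ≠ τ p.2 := fun hc => absurd (τ.injective hc) hp.ne
        simp [not_lt_of_ge h, lt_of_le_of_ne h (Ne.symm hne)]
    · intro p hp
      rcases lt_or_ge (τ⁻¹ p.1) (τ⁻¹ p.2) with h | h
      · simp [-Equiv.Perm.coe_inv, h, Equiv.Perm.apply_inv_self]
        simp only [hP, Finset.mem_filter, Finset.mem_univ, true_and] at hp
        simp [hp]
      · simp only [hP, Finset.mem_filter, Finset.mem_univ, true_and] at hp
        have hne : τ⁻¹ p.1 ≠ τ⁻¹ p.2 := fun hc => absurd (τ⁻¹.injective hc) hp.ne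
        have h' : τ⁻¹ p.2 < τ⁻¹ p.1 := lt_of_le_of_ne h (Ne.symm hne)
        simp [-Equiv.Perm.coe_inv, not_lt_of_ge h, h', Equiv.Perm.apply_inv_self, not_lt_of_ge (le_of_lt hp)]
    · intro p hp
      rcases lt_or_ge (τ p.1) (τ p.2) with h | h
      · simp [h, Equiv.Perm.inv_apply_self]
        simp only [hP, Finset.mem_filter, Finset.mem_univ, true_and] at hp
        simp [hp]
      · simp only [hP, Finset.mem_filter, Finset.mem_univ, true_and] at hp
        have hne : τ p.1 ≠ τ p.2 := fun hc => absurd (τ.injective hc) hp.ne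
        have h' : τ p.2 < τ p.1 := lt_of_le_of_ne h (Ne.symm hne)
        simp [not_lt_of_ge h, h', Equiv.Perm.inv_apply_self, not_lt_of_ge (le_of_lt hp)]
    · intro p hp
      simp only [hP, Finset.mem_filter, Finset.mem_univ, true_and] at hp
      rcases lt_or_ge (τ⁻¹ p.1) (τ⁻¹ p.2) with h | h
      · simp only [if_pos h, he, Function.comp_apply, Equiv.Perm.apply_inv_self,
          hp, if_true]
      · have hne : τ⁻¹ p.1 ≠ τ⁻¹ p.2 := fun hc => absurd (τ⁻¹.injective hc) hp.ne
        have h' : τ⁻¹ p.2 < τ⁻¹ p.1 := lt_of_le_of_ne h (Ne.symm hne)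
        simp only [if_neg (not_lt_of_ge h), he, Function.comp_apply,
          Equiv.Perm.apply_inv_self, asymm hp, if_false]
        rw [Nat.mul_comm]
  rw [hσ, ← Finset.prod_mul_distrib]
  apply Finset.prod_congr rfl
  intro p hp
  simp only [hP, Finset.mem_filter, Finset.mem_univ, true_and] at hp
  have hne : τ p.1 ≠ τ p.2 := fun hc => absurd (τ.injective hc) hp.ne
  have hsne : σ (τ p.1) ≠ σ (τ p.2) := fun hc => hne (σ.injective hc)
  have hsq : e p * e p = 1 := by
    rw [he, ← pow_add, ← two_mul, pow_mul]
    norm_num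
  rcases lt_or_ge (τ p.1) (τ p.2) with h | h
  · simp only [h, if_true, asymm h, if_false, mul_one, Equiv.Perm.mul_apply, he]
    rfl
  · have h' : τ p.2 < τ p.1 := lt_of_le_of_ne h (Ne.symm hne)
    simp only [not_lt_of_ge h, if_false, h', if_true, Equiv.Perm.mul_apply]
    rcases lt_or_ge (σ (τ p.1)) (σ (τ p.2)) with hs | hs
    · simp only [hs, if_true, asymm hs, if_false]
      show (1 : ℤ) = e p * e p
      exact hsq.symm
    · have hs' : σ (τ p.2) < σ (τ p.1) := lt_of_le_of_ne hs (Ne.symm hsne)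
      simp only [not_lt_of_ge hs, if_false, hs', if_true, one_mul]
end

section
/- For every n : ℕ, every multiweight α : Fin n → Bool and all distinct indices i, j in Fin n with α i = α j, the Koszul sign of the transposition swapping i and j is sgn(α, Equiv.swap i j) = (−1)^{ε_α(i)}. In particular, if α i = α j = true the transposition has Koszul sign −1, and if α i = α j = false it has Koszul sign +1. -/
lemma filter_swap_inversions_eq {n : ℕ} {i j : Fin n} (h : i < j) :
    Finset.univ.filter
      (fun p : Fin n × Fin n => p.1 < p.2 ∧ Equiv.swap i j p.2 < Equiv.swap i j p.1)
    = insert (i, j) ((Finset.Ioo i j).image (fun k => (i, k)) ∪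
        (Finset.Ioo i j).image (fun k => (k, j))) := by
  ext ⟨a, b⟩
  simp only [Finset.mem_filter_univ, Finset.mem_insert, Finset.mem_union,
    Finset.mem_image, Finset.mem_Ioo, Prod.mk.injEq]
  rw [Equiv.swap_apply_def, Equiv.swap_apply_def]
  split_ifs <;> grind

lemma prod_filter_swap_inversions {M : Type*} [CommMonoid M] {n : ℕ} {i j : Fin n} (h : i < j)
    (f : Fin n × Fin n → M) :
    ∏ p ∈ Finset.univ.filter
        (fun p : Fin n × Fin n => p.1 < p.2 ∧ Equiv.swap i j p.2 < Equiv.swap i j p.1), f p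
      = f (i, j) * ∏ k ∈ Finset.Ioo i j, f (i, k) * f (k, j) := by
  have hdisj : Disjoint ((Finset.Ioo i j).image (fun k => (i, k)))
      ((Finset.Ioo i j).image (fun k => (k, j))) := by
    simp only [Finset.disjoint_left, Finset.mem_image, Finset.mem_Ioo]
    grind
  have hij : (i, j) ∉ (Finset.Ioo i j).image (fun k => (i, k)) ∪
      (Finset.Ioo i j).image (fun k => (k, j)) := by
    simp only [Finset.mem_union, Finset.mem_image, Finset.mem_Ioo]
    grind
  rw [filter_swap_inversions_eq h, Finset.prod_insert hij, Finset.prod_union hdisj,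
    Finset.prod_image (Prod.mk_right_injective i).injOn,
    Finset.prod_image (Prod.mk_left_injective j).injOn, Finset.prod_mul_distrib]

lemma neg_one_pow_mul_mul_neg_one_pow_mul_comm (a b : ℕ) :
    (-1 : ℤ) ^ (a * b) * (-1) ^ (b * a) = 1 := by
  rw [mul_comm b, ← pow_add, (Even.add_self _).neg_one_pow]

/-- For distinct indices `i ≠ j` with `α i = α j`, the Koszul sign of the
transposition `Equiv.swap i j` is `(-1)^(ε_α i)`. -/
theorem koszulSign_swap_of_eq {n : ℕ} (α : Fin n → Bool) (i j : Fin n)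
    (hij : i ≠ j) (hα : α i = α j) :
    koszulSign α (Equiv.swap i j) = (-1 : ℤ) ^ (if α i then 1 else 0) := by
  wlog h : i < j generalizing i j
  · rw [Equiv.swap_comm, hα]
    exact this j i hij.symm hα.symm ((not_lt.1 h).lt_of_ne hij.symm)
  rw [koszulSign, prod_filter_swap_inversions h]
  simp only [← hα]
  rw [Finset.prod_eq_one fun k _ => neg_one_pow_mul_mul_neg_one_pow_mul_comm _ _, mul_one]
  cases α i <;> rfl
end

section
/- Let α : Fin n → Bool be a multiweight and σ a permutation of Fin n with α ∘ σ = α. Then σ preserves the support {i : Fin n | α i = true} (i.e. α (σ i) = α i for all i, so σ restricts to a permutation σ' of the subtype {i // α i = true}), and the Koszul sign of σ equals the sign of the induced permutation: (sgn(α, σ) : ℤ) = Equiv.Perm.sign σ', where σ' = Equiv.Perm.subtypePerm σ. -/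
open Equiv Finset

-- sign = signAux for Fin m
lemma sign_eq_signAux' {m : ℕ} (τ : Equiv.Perm (Fin m)) :
    Equiv.Perm.sign τ = Equiv.Perm.signAux τ := by
  refine Equiv.Perm.swap_induction_on τ ?_ ?_
  · simp [Equiv.Perm.signAux_one]
  · intro f x y hxy ih
    rw [Equiv.Perm.sign_mul, Equiv.Perm.signAux_mul, ih, Equiv.Perm.sign_swap hxy,
      Equiv.Perm.signAux_swap hxy]

lemma sign_eq_neg_one_pow {m : ℕ} (τ : Equiv.Perm (Fin m)) :
    (Equiv.Perm.sign τ : ℤ) =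
      (-1 : ℤ) ^ (Finset.univ.filter
        (fun p : Fin m × Fin m => p.1 < p.2 ∧ τ p.2 < τ p.1)).card := by
  rw [sign_eq_signAux', Equiv.Perm.signAux]
  push_cast
  simp only [apply_ite (fun u : ℤˣ => (u : ℤ)), Units.val_neg, Units.val_one]
  rw [Finset.prod_ite, Finset.prod_const, Finset.prod_const, one_pow, mul_one]
  congr 1
  apply Finset.card_nbij' (fun x => (x.2, x.1)) (fun p => ⟨p.2, p.1⟩)
  · rintro ⟨a, b⟩ hx
    simp only [Finset.mem_coe, Finset.mem_filter, Equiv.Perm.mem_finPairsLT] at hx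
    simp only [Finset.mem_coe, Finset.mem_filter, Finset.mem_univ, true_and]
    exact ⟨hx.1, lt_of_le_of_ne hx.2 (fun he => absurd (τ.injective he) (ne_of_lt hx.1).symm)⟩
  · rintro ⟨a, b⟩ hp
    simp only [Finset.mem_coe, Finset.mem_filter, Finset.mem_univ, true_and] at hp
    simp only [Finset.mem_coe, Finset.mem_filter, Equiv.Perm.mem_finPairsLT]
    exact ⟨hp.1, le_of_lt hp.2⟩
  · intro x _; rfl
  · intro p _; rfl


/-- If `α ∘ σ = α`, then `σ` preserves the support of `α` and the Koszul sign of
`σ` equals the sign of the permutation induced by `σ` on the support. -/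
theorem koszulSign_eq_sign_subtypePerm {n : ℕ} (α : Fin n → Bool)
    (σ : Equiv.Perm (Fin n)) (h : α ∘ ⇑σ = α) :
    (∀ i, α (σ i) = α i) ∧
      koszulSign α σ =
        (Equiv.Perm.sign
          (σ.subtypePerm (p := fun i => α i = true)
            (fun i => by exact iff_of_eq (congrArg (· = true) (congrFun h i)))) : ℤ) := by
  have hfix : ∀ i, α (σ i) = α i := fun i => congrFun h i
  refine ⟨hfix, ?_⟩
  set σ' := σ.subtypePerm (p := fun i => α i = true)
      (fun i => by exact iff_of_eq (congrArg (· = true) (congrFun h i))) with hσ'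
  set m := Fintype.card {i : Fin n // α i = true} with hm
  let eo : Fin m ≃o {i : Fin n // α i = true} := monoEquivOfFin _ rfl
  let τ : Equiv.Perm (Fin m) := (eo.toEquiv.symm).permCongr σ'
  have hsign : Equiv.Perm.sign σ' = Equiv.Perm.sign τ :=
    (Equiv.Perm.sign_permCongr eo.toEquiv.symm σ').symm
  have hτ : ∀ x : Fin m, τ x = eo.symm (σ' (eo x)) := fun x => by
    simp [τ, Equiv.permCongr_apply]
  -- koszulSign as a power of -1
  have hk : koszulSign α σ = (-1 : ℤ) ^ (Finset.univ.filter
      (fun p : Fin n × Fin n =>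
        (p.1 < p.2 ∧ σ p.2 < σ p.1) ∧ (α p.1 = true ∧ α p.2 = true))).card := by
    rw [koszulSign]
    rw [show (∏ p ∈ Finset.univ.filter
        (fun p : Fin n × Fin n => p.1 < p.2 ∧ σ p.2 < σ p.1),
        (-1 : ℤ) ^ ((if α p.1 then 1 else 0) * (if α p.2 then 1 else 0))) =
      ∏ p ∈ Finset.univ.filter
        (fun p : Fin n × Fin n => p.1 < p.2 ∧ σ p.2 < σ p.1),
        (if α p.1 = true ∧ α p.2 = true then (-1 : ℤ) else 1) from
      Finset.prod_congr rfl (fun p _ => by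
        by_cases h1 : α p.1 = true <;> by_cases h2 : α p.2 = true <;> simp [h1, h2])]
    rw [Finset.prod_ite, Finset.prod_const, Finset.prod_const, one_pow, mul_one,
      Finset.filter_filter]
  rw [hk, hsign, sign_eq_neg_one_pow τ]
  congr 1
  -- bijection between the two inversion sets
  refine Finset.card_bij
    (fun p hp => (eo.symm ⟨p.1, ((Finset.mem_filter.1 hp).2.2.1 : _)⟩,
                  eo.symm ⟨p.2, ((Finset.mem_filter.1 hp).2.2.2 : _)⟩)) ?_ ?_ ?_
  · intro p hp
    obtain ⟨-, ⟨hlt, hinv⟩, h1, h2⟩ := Finset.mem_filter.1 hp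
    simp only [Finset.mem_filter, Finset.mem_univ, true_and]
    constructor
    · exact eo.symm.lt_iff_lt.2 (Subtype.mk_lt_mk.2 hlt)
    · rw [hτ, hτ, OrderIso.apply_symm_apply, OrderIso.apply_symm_apply]
      refine eo.symm.lt_iff_lt.2 ?_
      simpa [hσ', Equiv.Perm.subtypePerm_apply, Subtype.mk_lt_mk] using hinv
  · intro p hp q hq hpq
    obtain ⟨h1, h2⟩ := Prod.mk.injEq .. ▸ hpq
    have e1 := congrArg Subtype.val (eo.symm.injective h1)
    have e2 := congrArg Subtype.val (eo.symm.injective h2)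
    exact Prod.ext e1 e2
  · intro q hq
    obtain ⟨-, hlt, hinv⟩ := Finset.mem_filter.1 hq
    refine ⟨((eo q.1 : Fin n), (eo q.2 : Fin n)), ?_, ?_⟩
    · simp only [Finset.mem_filter, Finset.mem_univ, true_and]
      refine ⟨⟨?_, ?_⟩, (eo q.1).2, (eo q.2).2⟩
      · exact Subtype.coe_lt_coe.2 (eo.lt_iff_lt.2 hlt)
      · rw [hτ, hτ] at hinv
        have := eo.symm.lt_iff_lt.1 hinv
        simpa [hσ', Equiv.Perm.subtypePerm_apply, Subtype.mk_lt_mk] using this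
    · simp [Subtype.eta]
end

section
/- Let p : ℕ, let w : Fin p → ℕ be weights with w A ≥ 1 for all A, and let W : ℕ. Suppose f : (Fin p → ℝ) → ℝ is smooth (ContDiff ℝ ⊤) and homogeneous of weight W, i.e. f (h_t x) = t^W * f x for all t : ℝ and all x. Then f is a polynomial function whose monomials all have weighted degree W: there exists P : MvPolynomial (Fin p) ℝ such that P is weighted homogeneous of degree W with respect to w (MvPolynomial.IsWeightedHomogeneous w P W) and f x = MvPolynomial.eval x P for all x. -/
open MvPolynomial Filter Topology

/-- A smooth function on `ℝ^p` that is homogeneous of weight `W` with respect to the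
dilations `h_t(x) = (t^(w A) · x A)_A` (with all weights `w A ≥ 1`) is a polynomial
function given by a weighted homogeneous polynomial of weighted degree `W`. -/
theorem homogeneous_is_weighted_polynomial (p W : ℕ) (w : Fin p → ℕ) (hw : ∀ A, 1 ≤ w A)
    (f : (Fin p → ℝ) → ℝ) (hf : ContDiff ℝ (⊤ : ℕ∞) f)
    (hhom : ∀ (t : ℝ) (x : Fin p → ℝ), f (fun A => t ^ (w A) * x A) = t ^ W * f x) :
    ∃ P : MvPolynomial (Fin p) ℝ,
      MvPolynomial.IsWeightedHomogeneous w P W ∧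
      ∀ x : Fin p → ℝ, f x = MvPolynomial.eval x P := by
  induction W using Nat.strong_induction_on generalizing f with
  | _ W IH =>
  rcases Nat.eq_zero_or_pos W with hW0 | hWpos
  · subst hW0
    refine ⟨C (f 0), isWeightedHomogeneous_C w _, fun x => ?_⟩
    have h := hhom 0 x
    have hcurve : (fun A => (0:ℝ) ^ (w A) * x A) = 0 := by
      funext A
      simp [zero_pow (by have := hw A; omega : w A ≠ 0)]
    rw [hcurve, pow_zero, one_mul] at h
    simp [← h]
  · -- W ≥ 1
    have hdiff : Differentiable ℝ f := hf.differentiable (by simp)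
    have hgsm : ∀ A : Fin p, ContDiff ℝ (⊤ : ℕ∞) fun x => fderiv ℝ f x (Pi.single A 1) :=
      fun A => (hf.fderiv_right (by simp)).clm_apply contDiff_const
    -- the linear dilation maps
    have hL : ∀ t : ℝ, ∃ L : (Fin p → ℝ) →L[ℝ] (Fin p → ℝ),
        ∀ y, L y = fun B => t ^ w B * y B := by
      intro t
      refine ⟨ContinuousLinearMap.pi (fun B => t ^ w B • ContinuousLinearMap.proj B),
        fun y => ?_⟩
      funext B
      simp [ContinuousLinearMap.proj_apply]
    -- scaling identity for partial derivatives
    have hderiv_scale : ∀ (t : ℝ) (x : Fin p → ℝ) (A : Fin p),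
        t ^ (w A) * (fderiv ℝ f (fun B => t ^ w B * x B) (Pi.single A 1))
          = t ^ W * fderiv ℝ f x (Pi.single A 1) := by
      intro t x A
      obtain ⟨L, hLy⟩ := hL t
      have hcomp : HasFDerivAt (fun y => t ^ W * f y) ((fderiv ℝ f (L x)).comp L) x := by
        have h1 : HasFDerivAt (fun y => f (L y)) ((fderiv ℝ f (L x)).comp L) x :=
          ((hdiff (L x)).hasFDerivAt).comp x L.hasFDerivAt
        have h2 : (fun y => f (L y)) = fun y => t ^ W * f y := by
          funext y; rw [hLy y]; exact hhom t y
        rwa [h2] at h1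
      have hright : HasFDerivAt (fun y => t ^ W * f y) (t ^ W • fderiv ℝ f x) x :=
        (hdiff x).hasFDerivAt.const_mul _
      have huniq := hcomp.unique hright
      have happ := congrArg (fun D : (Fin p → ℝ) →L[ℝ] ℝ => D (Pi.single A 1)) huniq
      simp only [ContinuousLinearMap.comp_apply, ContinuousLinearMap.smul_apply] at happ
      have hsingle : L (Pi.single A (1:ℝ)) = t ^ (w A) • (Pi.single A 1 : Fin p → ℝ) := by
        rw [hLy]
        funext B
        by_cases h : B = A
        · subst h; simp
        · simp [Pi.single_eq_of_ne h]
      rw [hsingle, (fderiv ℝ f (L x)).map_smul, hLy] at happ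
      simpa [smul_eq_mul] using happ
    -- continuity of the dilation curve at t = 0
    have hzero : ∀ x : Fin p → ℝ, (fun B => (0:ℝ) ^ w B * x B) = 0 := by
      intro x; funext B
      simp [zero_pow (by have := hw B; omega : w B ≠ 0)]
    have hcurve_cont : ∀ x : Fin p → ℝ,
        Tendsto (fun t : ℝ => (fun B => t ^ w B * x B)) (𝓝 0) (𝓝 0) := by
      intro x
      have hc : Continuous fun t : ℝ => (fun B => t ^ w B * x B) :=
        continuous_pi fun B => (continuous_pow _).mul continuous_const
      simpa [hzero x] using hc.tendsto 0
    -- key: each partial derivative is a polynomial, with X A * P of weight W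
    have key : ∀ A : Fin p, ∃ P : MvPolynomial (Fin p) ℝ,
        IsWeightedHomogeneous w (X A * P) W ∧
        ∀ x, fderiv ℝ f x (Pi.single A 1) = eval x P := by
      intro A
      set g : (Fin p → ℝ) → ℝ := fun x => fderiv ℝ f x (Pi.single A 1) with hgdef
      have hgc : Continuous g := (hgsm A).continuous
      have hgtend : ∀ x : Fin p → ℝ,
          Tendsto (fun t : ℝ => g (fun B => t ^ w B * x B)) (𝓝[≠] 0) (𝓝 (g 0)) := by
        intro x
        have := (hgc.tendsto 0).comp (hcurve_cont x)
        exact this.mono_left nhdsWithin_le_nhds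
      by_cases hA : w A ≤ W
      · have hid : ∀ (t : ℝ) (x : Fin p → ℝ),
            g (fun B => t ^ w B * x B) = t ^ (W - w A) * g x := by
          intro t x
          rcases eq_or_ne t 0 with rfl | ht
          · rw [hzero x]
            rcases lt_or_eq_of_le hA with hlt | heq
            · have hg0 : g 0 = 0 := by
                have h2 := hderiv_scale 2 0 A
                have hc0 : (fun B => (2:ℝ) ^ w B * (0 : Fin p → ℝ) B) = 0 := by
                  funext B; simp
                rw [hc0] at h2
                by_contra hne
                have h3 := mul_right_cancel₀ hne h2
                have hlt2 : (2:ℝ) ^ w A < 2 ^ W := by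
                  exact pow_lt_pow_right₀ one_lt_two hlt
                rw [h3] at hlt2
                exact lt_irrefl _ hlt2
              rw [hg0, zero_pow (by omega : W - w A ≠ 0), zero_mul]
            · have hconst : ∀ t : ℝ, t ≠ 0 → g (fun B => t ^ w B * x B) = g x := by
                intro t ht
                have h2 := hderiv_scale t x A
                rw [heq] at h2
                exact mul_left_cancel₀ (pow_ne_zero W ht) h2
              have h1 : Tendsto (fun t : ℝ => g (fun B => t ^ w B * x B)) (𝓝[≠] 0)
                  (𝓝 (g x)) := by
                apply Tendsto.congr' _ tendsto_const_nhds
                filter_upwards [self_mem_nhdsWithin] with t ht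
                exact (hconst t ht).symm
              have h3 := tendsto_nhds_unique (hgtend x) h1
              rw [heq, Nat.sub_self, pow_zero, one_mul]
              exact h3
          · have h2 := hderiv_scale t x A
            have hx : t ^ W = t ^ w A * t ^ (W - w A) := by
              rw [← pow_add, Nat.add_sub_cancel' hA]
            rw [hx, mul_assoc] at h2
            exact mul_left_cancel₀ (pow_ne_zero _ ht) h2
        obtain ⟨P, hP, hPe⟩ := IH (W - w A) (Nat.sub_lt hWpos (hw A)) g (hgsm A) hid
        refine ⟨P, ?_, hPe⟩
        have hm := (isWeightedHomogeneous_X w A (R := ℝ)).mul hP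
        rwa [Nat.add_sub_cancel' hA] at hm
      · push_neg at hA
        have hg0 : ∀ x : Fin p → ℝ, g x = 0 := by
          intro x
          have h1 : Tendsto (fun t : ℝ => t ^ (w A - W) * g (fun B => t ^ w B * x B))
              (𝓝[≠] 0) (𝓝 0) := by
            have hp : Tendsto (fun t : ℝ => t ^ (w A - W)) (𝓝 0) (𝓝 0) := by
              simpa [zero_pow (by omega : w A - W ≠ 0)] using
                (continuous_pow (w A - W)).tendsto (0:ℝ)
            have := (hp.mono_left nhdsWithin_le_nhds).mul (hgtend x)
            simpa using this
          have h2 : Tendsto (fun t : ℝ => t ^ (w A - W) * g (fun B => t ^ w B * x B))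
              (𝓝[≠] 0) (𝓝 (g x)) := by
            apply Tendsto.congr' _ tendsto_const_nhds
            filter_upwards [self_mem_nhdsWithin] with t ht
            have h3 := hderiv_scale t x A
            have hx : t ^ w A = t ^ W * t ^ (w A - W) := by
              rw [← pow_add, Nat.add_sub_cancel' hA.le]
            rw [hx, mul_assoc] at h3
            exact (mul_left_cancel₀ (pow_ne_zero W ht) h3).symm
          exact tendsto_nhds_unique h2 h1
        refine ⟨0, ?_, fun x => by rw [map_zero]; exact hg0 x⟩
        rw [mul_zero]
        exact isWeightedHomogeneous_zero ℝ w W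
    -- Euler's identity
    have euler : ∀ x : Fin p → ℝ,
        (W : ℝ) * f x = ∑ A, (w A : ℝ) * x A * fderiv ℝ f x (Pi.single A 1) := by
      intro x
      have hc : HasDerivAt (fun t : ℝ => (fun B => t ^ w B * x B))
          (fun B => (w B : ℝ) * x B) 1 := by
        rw [hasDerivAt_pi]
        intro B
        have := (hasDerivAt_pow (w B) (1:ℝ)).mul_const (x B)
        simpa using this
      have hx1 : (fun B => (1:ℝ) ^ w B * x B) = x := by funext B; simp
      have hfd : HasFDerivAt f (fderiv ℝ f x) (fun B => (1:ℝ) ^ w B * x B) := by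
        rw [hx1]; exact (hdiff x).hasFDerivAt
      have hcomp := hfd.comp_hasDerivAt 1 hc
      have hpow : HasDerivAt (fun t : ℝ => t ^ W * f x) ((W : ℝ) * f x) 1 := by
        simpa using (hasDerivAt_pow W (1:ℝ)).mul_const (f x)
      have heqf : (f ∘ fun (t : ℝ) B => t ^ w B * x B) = fun t => t ^ W * f x := by
        funext t; exact hhom t x
      rw [heqf] at hcomp
      have huniq := hcomp.unique hpow
      rw [← huniq]
      have hexp : (fun B => (w B : ℝ) * x B)
          = ∑ B : Fin p, Pi.single B ((w B : ℝ) * x B) :=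
        (Finset.univ_sum_single _).symm
      rw [hexp, map_sum]
      refine Finset.sum_congr rfl fun A _ => ?_
      have hsm : Pi.single A ((w A : ℝ) * x A) = ((w A : ℝ) * x A) • (Pi.single A 1 : Fin p → ℝ) := by
        rw [← Pi.single_smul, smul_eq_mul, mul_one]
      rw [hsm, (fderiv ℝ f x).map_smul, smul_eq_mul]
    -- assemble the polynomial
    choose P hPhom hPeval using key
    refine ⟨(W : ℝ)⁻¹ • ∑ A, (w A : ℝ) • (X A * P A), ?_, ?_⟩
    · have hmem : (∑ A, (w A : ℝ) • (X A * P A)) ∈ weightedHomogeneousSubmodule ℝ w W :=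
        Submodule.sum_mem _ fun A _ => Submodule.smul_mem _ _
          ((mem_weightedHomogeneousSubmodule ℝ w W _).2 (hPhom A))
      exact (mem_weightedHomogeneousSubmodule ℝ w W _).1 (Submodule.smul_mem _ _ hmem)
    · intro x
      have hWne : (W : ℝ) ≠ 0 := Nat.cast_ne_zero.2 (by omega)
      rw [smul_eval, map_sum]
      have hsum : ∑ A, eval x ((w A : ℝ) • (X A * P A))
          = ∑ A, (w A : ℝ) * x A * fderiv ℝ f x (Pi.single A 1) := by
        refine Finset.sum_congr rfl fun A _ => ?_
        rw [smul_eval, eval_mul, eval_X, hPeval A x, mul_assoc]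
      rw [hsum, ← euler x]
      field_simp
end

section
/- (Homogeneity degrees are non-negative integers.) Let p : ℕ, let w : Fin p → ℕ be weights with w A ≥ 1 for all A, let f : (Fin p → ℝ) → ℝ be smooth (ContDiff ℝ ⊤) and not identically zero, and let r : ℝ. Suppose f is positively homogeneous of degree r, i.e. f (h_t x) = t^r * f x (with t^r = Real.rpow t r) for all t > 0 and all x. Then r is a non-negative integer: there exists k : ℕ with r = k. -/
open Filter Topology Finset

/-- Homogeneity degrees are non-negative integers: if a smooth, not identically zero
function `f` on `ℝ^p` satisfies `f (h_t x) = t^r * f x` for all `t > 0` (with weights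
`w A ≥ 1` and `t^r = Real.rpow t r`), then `r` is a non-negative integer. -/
theorem homogeneity_degree_is_nat (p : ℕ) (w : Fin p → ℕ) (hw : ∀ A, 1 ≤ w A)
    (f : (Fin p → ℝ) → ℝ) (hf : ContDiff ℝ (⊤ : ℕ∞) f) (hne : ∃ x, f x ≠ 0) (r : ℝ)
    (hhom : ∀ t : ℝ, 0 < t → ∀ x : Fin p → ℝ,
      f (fun A => t ^ (w A) * x A) = Real.rpow t r * f x) :
    ∃ k : ℕ, r = k := by
  obtain ⟨x, hx⟩ := hne
  simp only [Real.rpow_eq_pow] at hhom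
  set c := f x with hc
  set g : ℝ → ℝ := fun t => f (fun A => t ^ (w A) * x A) with hgdef
  have hg : ContDiff ℝ (⊤ : ℕ∞) g := by
    apply hf.comp
    exact contDiff_pi.mpr fun A => (contDiff_id.pow _).mul contDiff_const
  have hgt : ∀ t : ℝ, 0 < t → g t = t ^ r * c := fun t ht => hhom t ht x
  -- key: iterated derivatives on (0, ∞)
  have hkey : ∀ n : ℕ, ∀ t : ℝ, 0 < t →
      iteratedDeriv n g t = ((∏ i ∈ Finset.range n, (r - i)) * c) * t ^ (r - n) := by
    intro n
    induction n with
    | zero => intro t ht; simp [iteratedDeriv_zero, hgt t ht, mul_comm]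
    | succ n ih =>
      intro t ht
      rw [iteratedDeriv_succ]
      have hev : iteratedDeriv n g =ᶠ[𝓝 t]
          fun s => ((∏ i ∈ Finset.range n, (r - i)) * c) * s ^ (r - n) := by
        filter_upwards [Ioi_mem_nhds ht] with s hs using ih s hs
      rw [hev.deriv_eq]
      have hd : HasDerivAt (fun s : ℝ => ((∏ i ∈ Finset.range n, (r - i)) * c) * s ^ (r - n))
          (((∏ i ∈ Finset.range n, (r - i)) * c) * ((r - n) * t ^ (r - n - 1))) t :=
        (Real.hasDerivAt_rpow_const (Or.inl ht.ne')).const_mul _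
      rw [hd.deriv, Finset.prod_range_succ]
      push_cast
      rw [show r - ((n:ℝ) + 1) = r - (n:ℝ) - 1 by ring]
      ring
  -- suppose r is not a natural number
  by_contra hcon
  push_neg at hcon
  set n : ℕ := ⌊r⌋₊ + 1 with hn
  have hrn : r - n < 0 := by
    rcases le_or_gt 0 r with h | h
    · have := Nat.lt_floor_add_one r
      rw [hn]; push_cast
      linarith
    · have : (0:ℝ) ≤ n := by positivity
      linarith
  have hC : ((∏ i ∈ Finset.range n, (r - i)) * c) ≠ 0 := by
    refine mul_ne_zero (Finset.prod_ne_zero_iff.mpr fun i _ => ?_) hx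
    exact sub_ne_zero.mpr (hcon i)
  set C := (∏ i ∈ Finset.range n, (r - i)) * c with hCdef
  -- continuity of the iterated derivative at 0
  have hcont : Tendsto (fun t => |iteratedDeriv n g t|) (𝓝[>] (0:ℝ))
      (𝓝 |iteratedDeriv n g 0|) := by
    have h := ((hg.continuous_iteratedDeriv n (by exact_mod_cast le_top)).tendsto 0).mono_left
      (nhdsWithin_le_nhds (s := Set.Ioi (0:ℝ)))
    exact h.abs
  -- but it blows up
  have hblow : Tendsto (fun t => |iteratedDeriv n g t|) (𝓝[>] (0:ℝ)) atTop := by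
    have h1 : Tendsto (fun t : ℝ => t ^ ((n:ℝ) - r)) (𝓝[>] (0:ℝ)) (𝓝[>] 0) := by
      rw [tendsto_nhdsWithin_iff]
      constructor
      · have : ContinuousAt (fun t : ℝ => t ^ ((n:ℝ) - r)) 0 :=
          Real.continuousAt_rpow_const 0 _ (Or.inr (by linarith))
        have h0 : (0:ℝ) ^ ((n:ℝ) - r) = 0 := Real.zero_rpow (by linarith)
        have h1 := this.tendsto.mono_left (nhdsWithin_le_nhds (s := Set.Ioi (0:ℝ)))
        rwa [h0] at h1
      · filter_upwards [self_mem_nhdsWithin] with t ht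
        exact Real.rpow_pos_of_pos ht _
    have h2 : Tendsto (fun t : ℝ => t ^ (r - n)) (𝓝[>] (0:ℝ)) atTop := by
      have := h1.inv_tendsto_nhdsGT_zero
      refine this.congr' ?_
      filter_upwards [self_mem_nhdsWithin] with t ht
      simp only [Pi.inv_apply]
      rw [← Real.rpow_neg (le_of_lt ht), neg_sub]
    have h3 : Tendsto (fun t : ℝ => |C| * t ^ (r - n)) (𝓝[>] (0:ℝ)) atTop :=
      h2.const_mul_atTop (abs_pos.mpr hC)
    refine h3.congr' ?_
    filter_upwards [self_mem_nhdsWithin] with t ht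
    rw [hkey n t ht]; simp [abs_mul, abs_of_pos (Real.rpow_pos_of_pos ht (r - (n:ℝ)))]; exact Or.inl (by rw [hCdef, abs_mul])
  exact not_tendsto_atTop_of_tendsto_nhds hcont hblow
end

section
/- (The canonical flip commutes with iterated tangent maps.) Let E and F be real normed vector spaces and let f : E → F be twice continuously differentiable (ContDiff ℝ 2). For a map g : G → H between real normed spaces, define its tangent map T g : G × G → H × H by T g (x, u) = (g x, fderiv ℝ g x u), and define the canonical flip κ_G : (G × G) × (G × G) → (G × G) × (G × G) by κ_G ((x, u), (v, w)) = ((x, v), (u, w)). Then T (T f) ∘ κ_E = κ_F ∘ T (T f). -/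
/-- The tangent map of `g : G → H`: `T g (x, u) = (g x, Dg(x) u)`. -/
noncomputable def tangentLiftMap {G H : Type*} [NormedAddCommGroup G] [NormedSpace ℝ G]
    [NormedAddCommGroup H] [NormedSpace ℝ H] (g : G → H) : G × G → H × H :=
  fun p => (g p.1, fderiv ℝ g p.1 p.2)

/-- The canonical flip `κ_G ((x, u), (v, w)) = ((x, v), (u, w))`. -/
def canonicalFlip (G : Type*) : (G × G) × (G × G) → (G × G) × (G × G) :=
  fun q => ((q.1.1, q.2.1), (q.1.2, q.2.2))

/-- Derivative of the tangent lift of a `C²` map. -/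
lemma tangentLift_hasFDerivAt {E F : Type*}
    [NormedAddCommGroup E] [NormedSpace ℝ E] [NormedAddCommGroup F] [NormedSpace ℝ F]
    (f : E → F) (hf : ContDiff ℝ 2 f) (x u : E) :
    HasFDerivAt (tangentLiftMap f)
      (((fderiv ℝ f x).comp (.fst ℝ E E)).prod
        ((((fderiv ℝ (fderiv ℝ f) x).flip u).comp (.fst ℝ E E)) +
          (fderiv ℝ f x).comp (.snd ℝ E E))) (x, u) := by
  have hdf : ContDiff ℝ 1 (fderiv ℝ f) := hf.fderiv_right (m := 1) (by norm_num)
  have h1 : HasFDerivAt f (fderiv ℝ f x) x :=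
    (hf.differentiable (by norm_num)).differentiableAt.hasFDerivAt
  have h2 : HasFDerivAt (fderiv ℝ f) (fderiv ℝ (fderiv ℝ f) x) x :=
    (hdf.differentiable one_ne_zero).differentiableAt.hasFDerivAt
  have hc : HasFDerivAt (fun p : E × E => fderiv ℝ f p.1)
      ((fderiv ℝ (fderiv ℝ f) x).comp (.fst ℝ E E)) (x, u) :=
    h2.comp (x, u) (hasFDerivAt_fst)
  have happ := hc.clm_apply (hasFDerivAt_snd)
  have hfst : HasFDerivAt (fun p : E × E => f p.1)
      ((fderiv ℝ f x).comp (.fst ℝ E E)) (x, u) := h1.comp (x, u) (hasFDerivAt_fst)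
  have h := HasFDerivAt.prodMk hfst happ
  exact h.congr_fderiv (by ext p <;> simp [add_comm])

/-- The canonical flip commutes with iterated tangent maps of a `C²` map:
`T (T f) ∘ κ_E = κ_F ∘ T (T f)`. -/
theorem tangentLift_tangentLift_comp_flip {E F : Type*}
    [NormedAddCommGroup E] [NormedSpace ℝ E] [NormedAddCommGroup F] [NormedSpace ℝ F]
    (f : E → F) (hf : ContDiff ℝ 2 f) :
    tangentLiftMap (tangentLiftMap f) ∘ canonicalFlip E =
      canonicalFlip F ∘ tangentLiftMap (tangentLiftMap f) := by
  funext q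
  obtain ⟨⟨x, u⟩, ⟨v, w⟩⟩ := q
  have key : ∀ a b : E, fderiv ℝ (tangentLiftMap f) (a, b) =
      (((fderiv ℝ f a).comp (.fst ℝ E E)).prod
        ((((fderiv ℝ (fderiv ℝ f) a).flip b).comp (.fst ℝ E E)) +
          (fderiv ℝ f a).comp (.snd ℝ E E))) := fun a b =>
    (tangentLift_hasFDerivAt f hf a b).fderiv
  have hsymm : ∀ a b c : E, fderiv ℝ (fderiv ℝ f) a b c = fderiv ℝ (fderiv ℝ f) a c b := by
    intro a b c
    exact second_derivative_symmetric
      (fun y => ((hf.differentiable (by norm_num)).differentiableAt).hasFDerivAt (x := y))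
      (((hf.fderiv_right (m := 1) (by norm_num)).differentiable
        one_ne_zero).differentiableAt.hasFDerivAt) b c
  simp only [Function.comp, canonicalFlip, tangentLiftMap, key]
  simp [hsymm x u v]
end

section
/- (The tangent lift of vector fields respects the Lie bracket.) Let E be a real normed vector space and let V, W : E → E be twice continuously differentiable vector fields (ContDiff ℝ 2). Define the tangent lift of a vector field X : E → E as the vector field dX : E × E → E × E given by dX (x, u) = (X x, fderiv ℝ X x u). Then the tangent lift of the Lie bracket is the Lie bracket of the tangent lifts: d(VectorField.lieBracket ℝ V W) = VectorField.lieBracket ℝ (dV) (dW), where VectorField.lieBracket ℝ X Y x = fderiv ℝ Y x (X x) − fderiv ℝ X x (Y x). -/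
noncomputable def tangentLiftVF {G : Type*} [NormedAddCommGroup G] [NormedSpace ℝ G]
    (X : G → G) : G × G → G × G :=
  fun p => (X p.1, fderiv ℝ X p.1 p.2)

/-- The tangent lift of vector fields respects the Lie bracket: for `C²` vector fields
`V, W` on a real normed space, `d[V, W] = [dV, dW]`. -/
theorem tangentLift_lieBracket {E : Type*} [NormedAddCommGroup E] [NormedSpace ℝ E]
    (V W : E → E) (hV : ContDiff ℝ 2 V) (hW : ContDiff ℝ 2 W) :
    tangentLiftVF (VectorField.lieBracket ℝ V W) =
      VectorField.lieBracket ℝ (tangentLiftVF V) (tangentLiftVF W) := by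
  have hVd : Differentiable ℝ V := hV.differentiable two_ne_zero
  have hWd : Differentiable ℝ W := hW.differentiable two_ne_zero
  have hV' : ContDiff ℝ 1 (fderiv ℝ V) := hV.fderiv_right (by norm_num)
  have hW' : ContDiff ℝ 1 (fderiv ℝ W) := hW.fderiv_right (by norm_num)
  funext p
  obtain ⟨x, u⟩ := p
  -- derivative of the tangent lift of a C² field X at (x,u)
  have lift : ∀ (X : E → E), Differentiable ℝ X → ContDiff ℝ 1 (fderiv ℝ X) →
      HasFDerivAt (tangentLiftVF X)
        (((fderiv ℝ X x).comp (ContinuousLinearMap.fst ℝ E E)).prod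
          (((fderiv ℝ X x).comp (ContinuousLinearMap.snd ℝ E E)) +
            ((fderiv ℝ (fderiv ℝ X) x).comp (ContinuousLinearMap.fst ℝ E E)).flip u)) (x, u) := by
    intro X hXd hX'
    have h1 : HasFDerivAt (fun q : E × E => X q.1)
        ((fderiv ℝ X x).comp (ContinuousLinearMap.fst ℝ E E)) (x, u) :=
      (hXd x).hasFDerivAt.comp (x, u) (hasFDerivAt_fst)
    have hc : HasFDerivAt (fun q : E × E => fderiv ℝ X q.1)
        ((fderiv ℝ (fderiv ℝ X) x).comp (ContinuousLinearMap.fst ℝ E E)) (x, u) :=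
      ((hX'.differentiable one_ne_zero) x).hasFDerivAt.comp (x, u) (hasFDerivAt_fst)
    have h2 := hc.clm_apply (hasFDerivAt_snd (p := (x, u)))
    exact HasFDerivAt.prodMk h1 h2
  have hdV := lift V hVd hV'
  have hdW := lift W hWd hW'
  -- derivative of the Lie bracket at x
  have hbr : HasFDerivAt (VectorField.lieBracket ℝ V W)
      (((fderiv ℝ W x).comp (fderiv ℝ V x) + (fderiv ℝ (fderiv ℝ W) x).flip (V x)) -
        ((fderiv ℝ V x).comp (fderiv ℝ W x) + (fderiv ℝ (fderiv ℝ V) x).flip (W x))) x := by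
    have h1 := (((hW'.differentiable one_ne_zero) x).hasFDerivAt).clm_apply (hVd x).hasFDerivAt
    have h2 := (((hV'.differentiable one_ne_zero) x).hasFDerivAt).clm_apply (hWd x).hasFDerivAt
    exact h1.sub h2
  have symV := (hV.contDiffAt (x := x)).isSymmSndFDerivAt (by simp)
  have symW := (hW.contDiffAt (x := x)).isSymmSndFDerivAt (by simp)
  simp only [tangentLiftVF, VectorField.lieBracket, hdV.fderiv, hdW.fderiv, hbr.fderiv]
  simp only [ContinuousLinearMap.add_apply, ContinuousLinearMap.sub_apply,
    ContinuousLinearMap.comp_apply, ContinuousLinearMap.flip_apply,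
    ContinuousLinearMap.coe_fst', ContinuousLinearMap.coe_snd',
    ContinuousLinearMap.prod_apply, Prod.mk.injEq, Prod.mk_sub_mk]
  constructor
  · trivial
  · rw [symV u (W x), symW u (V x)]
end
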